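/- Let Ω ⊆ ℝ be open and let k : Ω × Ω → ℂ be a positive definite kernel. Suppose k is of class S₁(U) on some open set U ⊆ ℝ² with D(Ω²) ⊆ U ⊆ Ω × Ω, where D(Ω²) = {(x,x) : x ∈ Ω}. Then k is separately differentiable on Ω × Ω: for every (u,v) ∈ Ω × Ω, the partial derivatives ∂k/∂u (u,v) and ∂k/∂v (u,v) exist in ℂ. -/

import Mathlib

/-!
Fix `x₀, v ∈ Ω` and let `g` be the difference quotient of `k (x₀, ·)` at `v`. Cauchy–Schwarz for
the positive semidefinite form of `k` at the points `x₀, v, s, t`, applied to `e_{x₀}` and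
`(e_s - e_v)/(s - v) - (e_t - e_v)/(t - v)`, bounds `‖g s - g t‖²` by `k (x₀, x₀)` times a
combination of second divided differences of `k` at `(v, v)`. Since `k` is of class `S₁` near the
diagonal, two applications of the mean value theorem show that these divided differences all tend
to `∂²k/∂v∂u (v, v)`, so the combination tends to `0`. Thus `g` is Cauchy at `v` and `k (x₀, ·)`
is differentiable at `v`; the Hermitian symmetry `k (u, v) = conj (k (v, u))` handles the first
variable.
-/

open Filter Topology ComplexOrder

/-- Partial derivative in the first variable. -/
noncomputable def pderiv1 (k : ℝ × ℝ → ℂ) : ℝ × ℝ → ℂ :=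
  fun p => deriv (fun u => k (u, p.2)) p.1

/-- Partial derivative in the second variable. -/
noncomputable def pderiv2 (k : ℝ × ℝ → ℂ) : ℝ × ℝ → ℂ :=
  fun p => deriv (fun v => k (p.1, v)) p.2

/-- `k` is of class `S_n(U)`. -/
def IsClassSn (n : ℕ) (U : Set (ℝ × ℝ)) (k : ℝ × ℝ → ℂ) : Prop :=
  (∀ m₁ < n, ∀ p ∈ U, DifferentiableAt ℝ (fun u => (pderiv1^[m₁] k) (u, p.2)) p.1) ∧
  (∀ m₁ ≤ n, ∀ m₂ < n, ∀ p ∈ U,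
    DifferentiableAt ℝ (fun v => (pderiv2^[m₂] (pderiv1^[m₁] k)) (p.1, v)) p.2) ∧
  (∀ m₁ ≤ n, ∀ m₂ ≤ n, ContinuousOn (pderiv2^[m₂] (pderiv1^[m₁] k)) U)

open ComplexConjugate

section PosDefKernel

variable {X : Type*}

def kernelForm (k : X × X → ℂ) {n : ℕ} (x : Fin n → X) (ξ η : Fin n → ℂ) : ℂ :=
  ∑ i, ∑ j, k (x i, x j) * ξ i * conj (η j)

def IsPosDefKernel (Ω : Set X) (k : X × X → ℂ) : Prop :=
  ∀ (n : ℕ) (x : Fin n → X), (∀ i, x i ∈ Ω) → ∀ ξ : Fin n → ℂ, 0 ≤ kernelForm k x ξ ξ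

variable {Ω : Set X} {k : X × X → ℂ}

theorem IsPosDefKernel.apply_swap (hk : IsPosDefKernel Ω k) {x y : X} (hx : x ∈ Ω)
    (hy : y ∈ Ω) : k (y, x) = conj (k (x, y)) := by
  have hform (ξ : Fin 2 → ℂ) : 0 ≤ kernelForm k ![x, y] ξ ξ :=
    hk 2 _ (by simp [Fin.forall_fin_two, hx, hy]) ξ
  have h₁ := hform ![1, 0]
  have h₂ := hform ![0, 1]
  have h₃ := hform ![1, 1]
  have h₄ := hform ![1, Complex.I]
  simp only [kernelForm, Fin.sum_univ_two, Complex.le_def, Fin.isValue, Matrix.cons_val_zero,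
    Matrix.cons_val_one, Matrix.cons_val_fin_one, map_one, map_zero, Complex.conj_I, mul_one,
    mul_zero, mul_neg, add_zero, zero_add, Complex.zero_re, Complex.zero_im, Complex.add_re,
    Complex.add_im, Complex.neg_re, Complex.neg_im, Complex.mul_re, Complex.mul_im, Complex.I_re,
    Complex.I_im, zero_sub, neg_neg] at h₁ h₂ h₃ h₄
  apply Complex.ext
  · rw [Complex.conj_re]; linarith
  · rw [Complex.conj_im]; linarith

theorem IsPosDefKernel.kernelForm_swap (hk : IsPosDefKernel Ω k) {n : ℕ} {x : Fin n → X}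
    (hx : ∀ i, x i ∈ Ω) (ξ η : Fin n → ℂ) : kernelForm k x η ξ = conj (kernelForm k x ξ η) := by
  simp only [kernelForm, map_sum, map_mul, Complex.conj_conj]
  rw [Finset.sum_comm]
  refine Finset.sum_congr rfl fun i _ => Finset.sum_congr rfl fun j _ => ?_
  rw [hk.apply_swap (hx i) (hx j)]
  ring

/-- The arguments are swapped to make the inner product conjugate-linear in the first one. -/
abbrev IsPosDefKernel.preInnerProductSpaceCore (hk : IsPosDefKernel Ω k) {n : ℕ}
    {x : Fin n → X} (hx : ∀ i, x i ∈ Ω) : PreInnerProductSpace.Core ℂ (Fin n → ℂ) where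
  inner ξ η := kernelForm k x η ξ
  conj_inner_symm ξ η := (hk.kernelForm_swap hx ξ η).symm
  re_inner_nonneg ξ := (Complex.le_def.1 (hk n x hx ξ)).1
  add_left ξ η ζ := by
    simp only [kernelForm, Pi.add_apply, map_add, mul_add, Finset.sum_add_distrib]
  smul_left ξ η c := by
    simp only [kernelForm, Pi.smul_apply, smul_eq_mul, map_mul, Finset.mul_sum]
    refine Finset.sum_congr rfl fun i _ => Finset.sum_congr rfl fun j _ => ?_
    ring

theorem IsPosDefKernel.norm_kernelForm_sq_le (hk : IsPosDefKernel Ω k) {n : ℕ}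
    {x : Fin n → X} (hx : ∀ i, x i ∈ Ω) (ξ η : Fin n → ℂ) :
    ‖kernelForm k x ξ η‖ ^ 2 ≤ (kernelForm k x ξ ξ).re * (kernelForm k x η η).re := by
  let _ := hk.preInnerProductSpaceCore hx
  have h := InnerProductSpace.Core.inner_mul_inner_self_le (𝕜 := ℂ) η ξ
  rw [InnerProductSpace.Core.norm_inner_symm ξ η, ← sq, mul_comm] at h
  exact h

end PosDefKernel

theorem norm_sub_sub_sub_add_sub_mul_le {k : ℝ × ℝ → ℂ} {A B : Set ℝ} (hA : Convex ℝ A)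
    (hB : Convex ℝ B)
    (h₁ : ∀ u ∈ A, ∀ w ∈ B, DifferentiableAt ℝ (fun u => k (u, w)) u)
    (h₂ : ∀ u ∈ A, ∀ w ∈ B, DifferentiableAt ℝ (fun w => pderiv1 k (u, w)) w)
    {L : ℂ} {C : ℝ} (hC : ∀ u ∈ A, ∀ w ∈ B, ‖pderiv2 (pderiv1 k) (u, w) - L‖ ≤ C)
    {s v t w : ℝ} (hs : s ∈ A) (hv : v ∈ A) (ht : t ∈ B) (hw : w ∈ B) :
    ‖k (s, t) - k (s, w) - k (v, t) + k (v, w) - (s - v) * (t - w) * L‖ ≤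
      C * (|s - v| * |t - w|) := by
  have hmul (c : ℂ) (x : ℝ) : HasDerivAt (fun y : ℝ => c * y) c x := by
    simpa using ((hasDerivAt_id (x : ℂ)).const_mul c).comp_ofReal
  have hinner : ∀ u ∈ A,
      ‖pderiv1 k (u, t) - pderiv1 k (u, w) - L * (t - w)‖ ≤ C * |t - w| := by
    intro u hu
    have hd : ∀ w' ∈ B, HasDerivWithinAt (fun w' : ℝ => pderiv1 k (u, w') - L * w')
        (pderiv2 (pderiv1 k) (u, w') - L) B w' := fun w' hw' =>
      ((h₂ u hu w' hw').hasDerivAt.sub (hmul L w')).hasDerivWithinAt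
    have := hB.norm_image_sub_le_of_norm_hasDerivWithin_le hd (hC u hu) hw ht
    rwa [Real.norm_eq_abs, sub_sub_sub_comm, ← mul_sub] at this
  have hd : ∀ u ∈ A, HasDerivWithinAt (fun u : ℝ => k (u, t) - k (u, w) - L * (t - w) * u)
      (pderiv1 k (u, t) - pderiv1 k (u, w) - L * (t - w)) A u := fun u hu =>
    (((h₁ u hu t ht).hasDerivAt.sub (h₁ u hu w hw).hasDerivAt).sub (hmul _ u)).hasDerivWithinAt
  have := hA.norm_image_sub_le_of_norm_hasDerivWithin_le hd hinner hv hs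
  rw [Real.norm_eq_abs] at this
  refine (le_of_eq (congrArg _ ?_)).trans (this.trans_eq (by ring))
  ring

noncomputable def secondDivDiff (k : ℝ × ℝ → ℂ) (v s t : ℝ) : ℂ :=
  (k (s, t) - k (s, v) - k (v, t) + k (v, v)) / ((s - v) * (t - v))

theorem tendsto_secondDivDiff {k : ℝ × ℝ → ℂ} {v : ℝ}
    (h₁ : ∀ᶠ p in 𝓝 (v, v), DifferentiableAt ℝ (fun u => k (u, p.2)) p.1)
    (h₂ : ∀ᶠ p in 𝓝 (v, v), DifferentiableAt ℝ (fun w => pderiv1 k (p.1, w)) p.2)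
    (hc : ContinuousAt (pderiv2 (pderiv1 k)) (v, v)) :
    Tendsto (fun p : ℝ × ℝ => secondDivDiff k v p.1 p.2) (𝓝[≠] v ×ˢ 𝓝[≠] v)
      (𝓝 (pderiv2 (pderiv1 k) (v, v))) := by
  rw [Metric.tendsto_nhds]
  intro ε hε
  obtain ⟨δ, hδ, hball⟩ := Metric.eventually_nhds_iff_ball.1
    ((h₁.and h₂).and (hc.eventually_mem (Metric.ball_mem_nhds _ (half_pos hε))))
  rw [← ball_prod_same] at hball
  have hnear := fun u hu w hw => hball (u, w) (Set.mk_mem_prod hu hw)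
  have hmem : {v}ᶜ ∩ Metric.ball v δ ∈ 𝓝[≠] v := inter_mem_nhdsWithin _ (Metric.ball_mem_nhds v hδ)
  filter_upwards [prod_mem_prod hmem hmem] with ⟨s, t⟩ ⟨⟨hsv, hs⟩, ⟨htv, ht⟩⟩
  have hrect := norm_sub_sub_sub_add_sub_mul_le (convex_ball v δ) (convex_ball v δ)
    (fun u hu w hw => (hnear u hu w hw).1.1) (fun u hu w hw => (hnear u hu w hw).1.2)
    (fun u hu w hw => (mem_ball_iff_norm.1 (hnear u hu w hw).2).le) hs (Metric.mem_ball_self hδ) ht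
    (Metric.mem_ball_self hδ)
  dsimp only [secondDivDiff] at hsv htv ⊢
  have hne : ((s : ℂ) - v) * (t - v) ≠ 0 := by
    simp only [← Complex.ofReal_sub, ← Complex.ofReal_mul, Complex.ofReal_ne_zero]
    exact mul_ne_zero (sub_ne_zero.2 hsv) (sub_ne_zero.2 htv)
  have hpos : 0 < |s - v| * |t - v| :=
    mul_pos (abs_pos.2 (sub_ne_zero.2 hsv)) (abs_pos.2 (sub_ne_zero.2 htv))
  rw [dist_eq_norm, div_sub' hne, norm_div, div_lt_iff₀ (norm_pos_iff.2 hne)]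
  simp only [norm_mul, ← Complex.ofReal_sub, Complex.norm_real, Real.norm_eq_abs] at hrect ⊢
  nlinarith

theorem IsPosDefKernel.norm_slope_sub_slope_sq_le {Ω : Set ℝ} {k : ℝ × ℝ → ℂ}
    (hk : IsPosDefKernel Ω k) {x₀ v s t : ℝ} (hx₀ : x₀ ∈ Ω) (hv : v ∈ Ω) (hs : s ∈ Ω)
    (ht : t ∈ Ω) :
    ‖slope (fun w => k (x₀, w)) v s - slope (fun w => k (x₀, w)) v t‖ ^ 2 ≤
      (k (x₀, x₀)).re * (secondDivDiff k v s s - secondDivDiff k v s t -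
        secondDivDiff k v t s + secondDivDiff k v t t).re := by
  set a : ℂ := ((s : ℂ) - v)⁻¹
  set b : ℂ := ((t : ℂ) - v)⁻¹
  have hx : ∀ i, ![x₀, v, s, t] i ∈ Ω := by simp [Fin.forall_fin_succ, hx₀, hv, hs, ht]
  have hcs := hk.norm_kernelForm_sq_le hx ![1, 0, 0, 0] ![0, b - a, a, -b]
  have ha : conj a = a := by simp [a, Complex.conj_ofReal]
  have hb : conj b = b := by simp [b, Complex.conj_ofReal]
  convert hcs using 3
  · simp only [slope_def_module, Complex.real_smul, Complex.ofReal_inv, Complex.ofReal_sub,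
      kernelForm, Fin.sum_univ_four, Fin.isValue, Matrix.cons_val_zero, Matrix.cons_val_one,
      Matrix.cons_val, map_zero, map_sub, map_neg, ha, hb, mul_zero, zero_mul, mul_neg, mul_one,
      zero_add, add_zero, neg_zero, a, b]
    ring
  · simp [kernelForm, Fin.sum_univ_four]
  · simp only [secondDivDiff, div_eq_mul_inv, mul_inv_rev, kernelForm, Fin.sum_univ_four,
      Fin.isValue, Matrix.cons_val_zero, Matrix.cons_val_one, Matrix.cons_val, map_zero, map_sub,
      map_neg, ha, hb, mul_zero, zero_mul, mul_neg, neg_mul, neg_neg, zero_add, add_zero, neg_zero]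
    ring

theorem IsPosDefKernel.differentiableAt_right {Ω : Set ℝ} {k : ℝ × ℝ → ℂ}
    (hk : IsPosDefKernel Ω k) {x₀ v : ℝ} (hx₀ : x₀ ∈ Ω) (hv : Ω ∈ 𝓝 v) {L : ℂ}
    (hL : Tendsto (fun p : ℝ × ℝ => secondDivDiff k v p.1 p.2) (𝓝[≠] v ×ˢ 𝓝[≠] v) (𝓝 L)) :
    DifferentiableAt ℝ (fun w => k (x₀, w)) v := by
  set l := 𝓝[≠] v
  set g := slope (fun w => k (x₀, w)) v
  have hΦ : Tendsto (fun p : ℝ × ℝ => secondDivDiff k v p.1 p.1 - secondDivDiff k v p.1 p.2 -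
      secondDivDiff k v p.2 p.1 + secondDivDiff k v p.2 p.2) (l ×ˢ l) (𝓝 0) := by
    simpa using (((hL.comp (tendsto_fst.prodMk tendsto_fst)).sub hL).sub
      (hL.comp (tendsto_snd.prodMk tendsto_fst))).add (hL.comp (tendsto_snd.prodMk tendsto_snd))
  have hΩ : ∀ᶠ s in l, s ∈ Ω := nhdsWithin_le_nhds hv
  have hbound : ∀ᶠ p in l ×ˢ l, ‖g p.1 - g p.2‖ ^ 2 ≤ (k (x₀, x₀)).re *
      (secondDivDiff k v p.1 p.1 - secondDivDiff k v p.1 p.2 -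
        secondDivDiff k v p.2 p.1 + secondDivDiff k v p.2 p.2).re := by
    filter_upwards [prod_mem_prod hΩ hΩ] with p hp
    exact hk.norm_slope_sub_slope_sq_le hx₀ (mem_of_mem_nhds hv) hp.1 hp.2
  have hsq : Tendsto (fun p : ℝ × ℝ => ‖g p.1 - g p.2‖ ^ 2) (l ×ˢ l) (𝓝 0) := by
    refine squeeze_zero' (Eventually.of_forall fun p => sq_nonneg _) hbound ?_
    simpa using ((Complex.continuous_re.tendsto 0).comp hΦ).const_mul (k (x₀, x₀)).re
  have hcauchy : Tendsto (fun p : ℝ × ℝ => g p.1 - g p.2) (l ×ˢ l) (𝓝 0) := by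
    rw [tendsto_zero_iff_norm_tendsto_zero]
    simpa using hsq.sqrt
  obtain ⟨c, hc⟩ := cauchy_map_iff_exists_tendsto.1
    ((IsUniformAddGroup.cauchy_map_iff_tendsto _ _).2 ⟨inferInstance, hcauchy⟩)
  exact (hasDerivAt_iff_tendsto_slope.2 hc).differentiableAt

theorem stmt12_general (Ω : Set ℝ) (hΩ : IsOpen Ω) (k : ℝ × ℝ → ℂ)
    (hpd : ∀ (n : ℕ) (x : Fin n → ℝ), (∀ i, x i ∈ Ω) → ∀ ξ : Fin n → ℂ,
      0 ≤ ∑ i, ∑ j, k (x i, x j) * ξ i * (starRingEnd ℂ) (ξ j))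
    (U : Set (ℝ × ℝ)) (hUopen : IsOpen U)
    (hdiag : ∀ x ∈ Ω, (x, x) ∈ U)
    (hs : IsClassSn 1 U k) :
    ∀ p ∈ Ω ×ˢ Ω,
      DifferentiableAt ℝ (fun u => k (u, p.2)) p.1 ∧
      DifferentiableAt ℝ (fun v => k (p.1, v)) p.2 := by
  have hk : IsPosDefKernel Ω k := hpd
  have hright : ∀ x₀ ∈ Ω, ∀ v ∈ Ω, DifferentiableAt ℝ (fun w => k (x₀, w)) v := by
    intro x₀ hx₀ v hv
    have hU : U ∈ 𝓝 (v, v) := hUopen.mem_nhds (hdiag v hv)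
    exact hk.differentiableAt_right hx₀ (hΩ.mem_nhds hv) <| tendsto_secondDivDiff
      (eventually_of_mem hU (hs.1 0 one_pos)) (eventually_of_mem hU (hs.2.1 1 le_rfl 0 one_pos))
      ((hs.2.2 1 le_rfl 1 le_rfl).continuousAt hU)
  rintro ⟨u, v⟩ ⟨hu, hv⟩
  refine ⟨?_, hright u hu v hv⟩
  have hswap : (fun w => k (w, v)) =ᶠ[𝓝 u] fun w => conj (k (v, w)) :=
    eventually_of_mem (hΩ.mem_nhds hu) fun w hw => hk.apply_swap hv hw
  exact (hright v hv u hu).star.congr_of_eventuallyEq hswap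

/-- A positive definite kernel on an open `Ω ⊆ ℝ` of class `S₁` on an
open neighborhood of the diagonal is separately differentiable on all of `Ω × Ω`. -/
theorem stmt12 (Ω : Set ℝ) (hΩ : IsOpen Ω) (k : ℝ × ℝ → ℂ)
    (hpd : ∀ (n : ℕ) (x : Fin n → ℝ), (∀ i, x i ∈ Ω) → ∀ ξ : Fin n → ℂ,
      0 ≤ ∑ i, ∑ j, k (x i, x j) * ξ i * (starRingEnd ℂ) (ξ j))
    (U : Set (ℝ × ℝ)) (hUopen : IsOpen U)
    (hdiag : ∀ x ∈ Ω, (x, x) ∈ U) (hUsub : U ⊆ Ω ×ˢ Ω)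
    (hs : IsClassSn 1 U k) :
    ∀ p ∈ Ω ×ˢ Ω,
      DifferentiableAt ℝ (fun u => k (u, p.2)) p.1 ∧
      DifferentiableAt ℝ (fun v => k (p.1, v)) p.2 :=
  stmt12_general Ω hΩ k hpd U hUopen hdiag hs
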